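/- In hyperbolic space (H² or H³), for any geodesic triangle with vertices A, B, C, the side AC lies in the closed ln(√2 + 1)-neighborhood of the union AB ∪ BC of the other two sides. -/

import Mathlib

/-- Inverse hyperbolic cosine. -/
noncomputable def arcosh (x : ℝ) : ℝ := Real.log (x + Real.sqrt (x ^ 2 - 1))

/-- Hyperbolic distance between two points of the upper half-space model of `H³`
(points of `ℝ × ℝ × ℝ` with positive third coordinate), given by the standard formula
`cosh d = 1 + ‖p - q‖² / (2 zₚ z_q)`. -/
noncomputable def hDist (p q : ℝ × ℝ × ℝ) : ℝ :=
  arcosh (1 + ((p.1 - q.1) ^ 2 + (p.2.1 - q.2.1) ^ 2 + (p.2.2 - q.2.2) ^ 2) /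
    (2 * p.2.2 * q.2.2))

/-- The geodesic segment from `A` to `B` in the upper half-space model of `H³`, described
metrically: the set of points lying between `A` and `B`. -/
def hSeg (A B : ℝ × ℝ × ℝ) : Set (ℝ × ℝ × ℝ) :=
  {P | 0 < P.2.2 ∧ hDist A P + hDist P B = hDist A B}

/-!
Work in the hyperboloid model: `ι = toHyperboloid` maps the upper half-space onto the upper
sheet of `⟨v, v⟩ = -1` in Minkowski space `ℝ³ × ℝ`, with `⟨ι p, ι q⟩ = -cosh (hDist p q)`.
If `P` lies on the segment `AC`, then `sinh |PC| • ι A + sinh |AP| • ι C = sinh |AC| • ι P`;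
pairing this with `ι B` shows that the angle at `P` is non-acute in one of the triangles
`APB`, `CPB`, say `APB`. Then the foot `Q` of the perpendicular from `P` to the geodesic `AB`
lies between `A` and `B`, and `cosh |PQ| ≤ √2` follows from `cosh |AP| cosh |PB| ≤ cosh |AB|`.
Finally `arcosh √2 = log (√2 + 1)`.
-/

open scoped RealInnerProductSpace

lemma arcosh_eq_real_arcosh : arcosh = Real.arcosh := rfl

section Minkowski

variable {E : Type*} [NormedAddCommGroup E] [InnerProductSpace ℝ E]

def minkowski : LinearMap.BilinForm ℝ (E × ℝ) :=
  LinearMap.mk₂ ℝ (fun v w => ⟪v.1, w.1⟫ - v.2 * w.2)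
    (fun _ _ _ => by simp only [Prod.fst_add, Prod.snd_add, inner_add_left]; ring)
    (fun _ _ _ => by
      simp only [Prod.smul_fst, Prod.smul_snd, real_inner_smul_left, smul_eq_mul]; ring)
    (fun _ _ _ => by simp only [Prod.fst_add, Prod.snd_add, inner_add_right]; ring)
    (fun _ _ _ => by
      simp only [Prod.smul_fst, Prod.smul_snd, real_inner_smul_right, smul_eq_mul]; ring)

lemma minkowski_apply (v w : E × ℝ) : minkowski v w = ⟪v.1, w.1⟫ - v.2 * w.2 := rfl

lemma eq_zero_of_minkowski_eq_zero {v w : E × ℝ} (hv : minkowski v v = 0)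
    (hw : minkowski w w < 0) (hvw : minkowski v w = 0) : v = 0 := by
  rw [minkowski_apply, real_inner_self_eq_norm_sq] at hv hw
  rw [minkowski_apply] at hvw
  have hcs := real_inner_mul_inner_self_le v.1 w.1
  rw [real_inner_self_eq_norm_sq, real_inner_self_eq_norm_sq,
    show ⟪v.1, w.1⟫ = v.2 * w.2 by linarith] at hcs
  have hsq : v.2 ^ 2 * (w.2 ^ 2 - ‖w.1‖ ^ 2) ≤ 0 := by nlinarith
  have h2 : v.2 = 0 :=
    sq_eq_zero_iff.mp (le_antisymm (nonpos_of_mul_nonpos_left hsq (by linarith)) (sq_nonneg _))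
  have h1 : v.1 = 0 := by
    rw [← norm_eq_zero, ← sq_eq_zero_iff]
    simpa [h2] using hv
  exact Prod.ext h1 h2

end Minkowski

lemma hDist_comm (p q : ℝ × ℝ × ℝ) : hDist p q = hDist q p := by
  unfold hDist; ring_nf

lemma hDist_self (p : ℝ × ℝ × ℝ) : hDist p p = 0 := by
  simp [hDist, arcosh_eq_real_arcosh]

lemma hSeg_comm (A B : ℝ × ℝ × ℝ) : hSeg A B = hSeg B A := by
  ext P
  change _ ∧ _ ↔ _ ∧ _
  rw [hDist_comm A P, hDist_comm P B, hDist_comm A B, add_comm]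

section UpperHalfSpace

variable {p q : ℝ × ℝ × ℝ}

lemma hDist_nonneg (hp : 0 < p.2.2) (hq : 0 < q.2.2) : 0 ≤ hDist p q :=
  Real.arcosh_nonneg (le_add_of_nonneg_right (by positivity))

lemma sinh_hDist_nonneg (hp : 0 < p.2.2) (hq : 0 < q.2.2) : 0 ≤ Real.sinh (hDist p q) :=
  Real.sinh_nonneg_iff.mpr (hDist_nonneg hp hq)

lemma cosh_hDist (hp : 0 < p.2.2) (hq : 0 < q.2.2) :
    Real.cosh (hDist p q) = 1 + ((p.1 - q.1) ^ 2 + (p.2.1 - q.2.1) ^ 2 + (p.2.2 - q.2.2) ^ 2) /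
      (2 * p.2.2 * q.2.2) :=
  Real.cosh_arcosh (le_add_of_nonneg_right (by positivity))

lemma eq_of_hDist_eq_zero (hp : 0 < p.2.2) (hq : 0 < q.2.2) (h : hDist p q = 0) : p = q := by
  have hcosh := cosh_hDist hp hq
  rw [h, Real.cosh_zero, left_eq_add, div_eq_zero_iff] at hcosh
  have hsq : (p.1 - q.1) ^ 2 + (p.2.1 - q.2.1) ^ 2 + (p.2.2 - q.2.2) ^ 2 = 0 :=
    hcosh.resolve_right (by positivity)
  have h1 : p.1 = q.1 := by
    nlinarith [sq_nonneg (p.1 - q.1), sq_nonneg (p.2.1 - q.2.1), sq_nonneg (p.2.2 - q.2.2)]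
  have h2 : p.2.1 = q.2.1 := by
    nlinarith [sq_nonneg (p.1 - q.1), sq_nonneg (p.2.1 - q.2.1), sq_nonneg (p.2.2 - q.2.2)]
  have h3 : p.2.2 = q.2.2 := by
    nlinarith [sq_nonneg (p.1 - q.1), sq_nonneg (p.2.1 - q.2.1), sq_nonneg (p.2.2 - q.2.2)]
  exact Prod.ext h1 (Prod.ext h2 h3)

end UpperHalfSpace

lemma le_log_sqrt_two_add_one_of_cosh_le {d : ℝ} (hd : 0 ≤ d) (h : Real.cosh d ≤ √2) :
    d ≤ Real.log (√2 + 1) := by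
  have harcosh : Real.arcosh √2 = Real.log (√2 + 1) := by
    norm_num [Real.arcosh, add_comm]
  rw [← harcosh, ← Real.arcosh_cosh hd]
  exact (Real.arcosh_le_arcosh (Real.cosh_pos d) (by positivity)).mpr h

noncomputable def toHyperboloid (p : ℝ × ℝ × ℝ) : EuclideanSpace ℝ (Fin 3) × ℝ :=
  (!₂[p.1 / p.2.2, p.2.1 / p.2.2, (p.1 ^ 2 + p.2.1 ^ 2 + p.2.2 ^ 2 - 1) / (2 * p.2.2)],
    (p.1 ^ 2 + p.2.1 ^ 2 + p.2.2 ^ 2 + 1) / (2 * p.2.2))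

lemma minkowski_apply_fin_three (v w : EuclideanSpace ℝ (Fin 3) × ℝ) :
    minkowski v w = v.1 0 * w.1 0 + v.1 1 * w.1 1 + v.1 2 * w.1 2 - v.2 * w.2 := by
  simp only [minkowski_apply, PiLp.inner_apply, RCLike.inner_apply, Real.ringHom_apply,
    Fin.sum_univ_three]
  ring

lemma minkowski_toHyperboloid {p q : ℝ × ℝ × ℝ} (hp : 0 < p.2.2) (hq : 0 < q.2.2) :
    minkowski (toHyperboloid p) (toHyperboloid q) = -Real.cosh (hDist p q) := by
  rw [cosh_hDist hp hq, minkowski_apply_fin_three]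
  simp only [toHyperboloid, Matrix.cons_val_zero, Matrix.cons_val_one, Matrix.cons_val]
  field_simp
  ring

lemma minkowski_toHyperboloid_self {p : ℝ × ℝ × ℝ} (hp : 0 < p.2.2) :
    minkowski (toHyperboloid p) (toHyperboloid p) = -1 := by
  rw [minkowski_toHyperboloid hp hp, hDist_self, Real.cosh_zero]

lemma toHyperboloid_snd_sub (p : ℝ × ℝ × ℝ) (hp : 0 < p.2.2) :
    (toHyperboloid p).2 - (toHyperboloid p).1 2 = p.2.2⁻¹ := by
  simp only [toHyperboloid, Matrix.cons_val]
  field_simp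
  ring

lemma exists_eq_smul_toHyperboloid {v : EuclideanSpace ℝ (Fin 3) × ℝ}
    (hv : minkowski v v < 0) (hfuture : v.1 2 < v.2) :
    ∃ Q : ℝ × ℝ × ℝ, 0 < Q.2.2 ∧ ∃ t : ℝ, 0 < t ∧ v = t • toHyperboloid Q := by
  set t := √(-minkowski v v)
  have htpos : 0 < t := Real.sqrt_pos.mpr (neg_pos.mpr hv)
  have ht2 : t ^ 2 = -minkowski v v := Real.sq_sqrt (neg_nonneg.mpr hv.le)
  set k := v.2 - v.1 2
  have hkpos : 0 < k := sub_pos.mpr hfuture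
  -- `Q` is the preimage of `v / t`
  refine ⟨(v.1 0 / k, v.1 1 / k, t / k), div_pos htpos hkpos, t, htpos, ?_⟩
  rw [minkowski_apply_fin_three] at ht2
  ext i
  · fin_cases i <;>
      simp only [toHyperboloid, Prod.smul_mk, smul_eq_mul, PiLp.smul_apply, Fin.zero_eta,
        Fin.mk_one, Fin.reduceFinMk, Matrix.cons_val_zero, Matrix.cons_val_one, Matrix.cons_val] <;>
      field_simp
    linear_combination -ht2
  · simp only [toHyperboloid, Prod.smul_mk, smul_eq_mul]
    field_simp
    linear_combination -ht2

/-- By the hyperbolic law of cosines `cosh c = cosh a cosh b - sinh a sinh b cos γ`, this says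
that the angle at `P` of the triangle `APB` is at least `π / 2`. -/
def AngleNonacute (A P B : ℝ × ℝ × ℝ) : Prop :=
  Real.cosh (hDist A P) * Real.cosh (hDist P B) ≤ Real.cosh (hDist A B)

section Triangles

variable {A B C P Q : ℝ × ℝ × ℝ}

lemma sinh_smul_add_sinh_smul_of_mem_hSeg (hA : 0 < A.2.2) (hC : 0 < C.2.2)
    (hP : P ∈ hSeg A C) :
    Real.sinh (hDist P C) • toHyperboloid A + Real.sinh (hDist A P) • toHyperboloid C =
      Real.sinh (hDist A C) • toHyperboloid P := by
  obtain ⟨hPz, hsum⟩ := hP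
  rw [← hsum, ← sub_eq_zero]
  -- the difference is a null vector orthogonal to the timelike vector `toHyperboloid P`
  refine eq_zero_of_minkowski_eq_zero ?_
    ((minkowski_toHyperboloid_self hPz).trans_lt neg_one_lt_zero) ?_ <;>
  simp only [map_sub, map_add, map_smul, LinearMap.sub_apply, LinearMap.add_apply,
    LinearMap.smul_apply, smul_eq_mul, minkowski_toHyperboloid, hA, hC, hPz, ← hsum,
    hDist_self, hDist_comm C A, hDist_comm P A, hDist_comm C P, Real.cosh_zero,
    Real.sinh_add, Real.cosh_add]
  · linear_combination (Real.sinh (hDist P C)) ^ 2 * Real.cosh_sq (hDist A P) +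
      (Real.sinh (hDist A P)) ^ 2 * Real.cosh_sq (hDist P C)
  · ring

lemma angleNonacute_or_of_mem_hSeg (hA : 0 < A.2.2) (hB : 0 < B.2.2) (hC : 0 < C.2.2)
    (hP : P ∈ hSeg A C) : AngleNonacute A P B ∨ AngleNonacute C P B := by
  have hrel := congrArg (fun v => minkowski v (toHyperboloid B))
    (sinh_smul_add_sinh_smul_of_mem_hSeg hA hC hP)
  simp only [map_add, map_smul, LinearMap.add_apply, LinearMap.smul_apply, smul_eq_mul,
    minkowski_toHyperboloid, hA, hB, hC, hP.1, ← hP.2, Real.sinh_add] at hrel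
  by_contra! h
  simp only [AngleNonacute, hDist_comm C P, not_le] at h
  have hs := sinh_hDist_nonneg hA hP.1
  have ht := sinh_hDist_nonneg hP.1 hC
  have hsinh : Real.sinh (hDist A P) = 0 := by nlinarith
  obtain rfl := eq_of_hDist_eq_zero hA hP.1 (Real.sinh_eq_zero.mp hsinh)
  rw [hDist_self, Real.cosh_zero, one_mul] at h
  exact h.1.false

lemma mem_hSeg_of_toHyperboloid_eq {x y : ℝ} (hA : 0 < A.2.2) (hB : 0 < B.2.2)
    (hQ : 0 < Q.2.2) (hx : 0 ≤ x) (hy : 0 ≤ y)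
    (h : toHyperboloid Q = x • toHyperboloid A + y • toHyperboloid B) : Q ∈ hSeg A B := by
  refine ⟨hQ, ?_⟩
  have hQQ := minkowski_toHyperboloid_self hQ
  have hAQ := minkowski_toHyperboloid hA hQ
  have hQB := minkowski_toHyperboloid hQ hB
  rw [h] at hQQ hAQ hQB
  simp only [map_add, map_smul, LinearMap.add_apply, LinearMap.smul_apply, smul_eq_mul,
    minkowski_toHyperboloid, hA, hB, hDist_self, hDist_comm B A, Real.cosh_zero] at hQQ hAQ hQB
  set c := Real.cosh (hDist A B)
  have hnorm : x ^ 2 + y ^ 2 + 2 * x * y * c = 1 := by linear_combination -hQQ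
  have hcAQ : Real.cosh (hDist A Q) = x + y * c := by linear_combination hAQ
  have hcQB : Real.cosh (hDist Q B) = x * c + y := by linear_combination hQB
  have hsAQ : Real.sinh (hDist A Q) = y * Real.sinh (hDist A B) := by
    refine (sq_eq_sq₀ (sinh_hDist_nonneg hA hQ) (mul_nonneg hy (sinh_hDist_nonneg hA hB))).mp ?_
    linear_combination -Real.cosh_sq (hDist A Q) + y ^ 2 * Real.cosh_sq (hDist A B) +
      (Real.cosh (hDist A Q) + x + y * c) * hcAQ + hnorm
  have hsQB : Real.sinh (hDist Q B) = x * Real.sinh (hDist A B) := by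
    refine (sq_eq_sq₀ (sinh_hDist_nonneg hQ hB) (mul_nonneg hx (sinh_hDist_nonneg hA hB))).mp ?_
    linear_combination -Real.cosh_sq (hDist Q B) + x ^ 2 * Real.cosh_sq (hDist A B) +
      (Real.cosh (hDist Q B) + x * c + y) * hcQB + hnorm
  apply Real.cosh_injOn (add_nonneg (hDist_nonneg hA hQ) (hDist_nonneg hQ hB))
    (hDist_nonneg hA hB)
  rw [Real.cosh_add, hsAQ, hsQB]
  linear_combination Real.cosh (hDist Q B) * hcAQ + (x + y * c) * hcQB -
    x * y * Real.cosh_sq (hDist A B) + c * hnorm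

lemma exists_mem_hSeg_smul_toHyperboloid_eq {x y : ℝ} (hA : 0 < A.2.2) (hB : 0 < B.2.2)
    (hx : 0 ≤ x) (hy : 0 ≤ y) (hxy : 0 < x + y) :
    ∃ Q ∈ hSeg A B, ∃ t : ℝ, 0 < t ∧
      x • toHyperboloid A + y • toHyperboloid B = t • toHyperboloid Q := by
  set v := x • toHyperboloid A + y • toHyperboloid B with hv
  have hvv : minkowski v v < 0 := by
    simp only [v, map_add, map_smul, LinearMap.add_apply, LinearMap.smul_apply, smul_eq_mul,
      minkowski_toHyperboloid, hA, hB, hDist_self, hDist_comm B A, Real.cosh_zero]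
    nlinarith [Real.one_le_cosh (hDist A B), mul_nonneg hx hy]
  have hfuture : v.1 2 < v.2 := by
    have hvt : v.2 - v.1 2 = x * A.2.2⁻¹ + y * B.2.2⁻¹ := by
      simp only [v, Prod.snd_add, Prod.fst_add, Prod.smul_snd, Prod.smul_fst, PiLp.add_apply,
        PiLp.smul_apply, smul_eq_mul]
      linear_combination x * toHyperboloid_snd_sub A hA + y * toHyperboloid_snd_sub B hB
    rw [← sub_pos, hvt]
    rcases hx.eq_or_lt with rfl | hx0
    · rw [zero_mul, zero_add]
      exact mul_pos (by linarith) (inv_pos.mpr hB)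
    · exact add_pos_of_pos_of_nonneg (mul_pos hx0 (inv_pos.mpr hA))
        (mul_nonneg hy (inv_pos.mpr hB).le)
  obtain ⟨Q, hQ, t, ht, hvQ⟩ := exists_eq_smul_toHyperboloid hvv hfuture
  refine ⟨Q, mem_hSeg_of_toHyperboloid_eq hA hB hQ (div_nonneg hx ht.le) (div_nonneg hy ht.le) ?_,
    t, ht, hvQ⟩
  rw [div_eq_inv_mul, div_eq_inv_mul, mul_smul, mul_smul, ← smul_add, ← hv, hvQ, smul_smul,
    inv_mul_cancel₀ ht.ne', one_smul]

lemma exists_mem_hSeg_hDist_le_of_angleNonacute (hA : 0 < A.2.2) (hB : 0 < B.2.2)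
    (hP : 0 < P.2.2) (h : AngleNonacute A P B) :
    ∃ Q ∈ hSeg A B, hDist P Q ≤ Real.log (√2 + 1) := by
  unfold AngleNonacute at h
  set r := Real.cosh (hDist A B)
  set u := Real.cosh (hDist A P) with hu_def
  set m := Real.cosh (hDist P B)
  have hu : 1 ≤ u := Real.one_le_cosh _
  have hm : 1 ≤ m := Real.one_le_cosh _
  rcases (Real.one_le_cosh (hDist A B)).eq_or_lt with hr | hr
  · have hAP : hDist A P = 0 := by
      rw [← Real.arcosh_cosh (hDist_nonneg hA hP), ← hu_def, show u = 1 by nlinarith,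
        Real.arcosh_zero]
    refine ⟨A, ⟨hA, by rw [hDist_self, zero_add]⟩, ?_⟩
    rw [hDist_comm, hAP]
    exact Real.log_nonneg (by linarith [Real.sqrt_nonneg 2])
  -- `x • ι A + y • ι B` is `r ^ 2 - 1` times the orthogonal projection of `ι P` onto the
  -- plane of `ι A` and `ι B`: `Q` is the foot of the perpendicular from `P` to the line `AB`
  set x := r * m - u
  set y := r * u - m
  have hx : 0 ≤ x := by nlinarith
  have hy : 0 ≤ y := by nlinarith
  have hK : 0 < x * u + y * m := by nlinarith
  obtain ⟨Q, hQ, t, ht, hvQ⟩ :=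
    exists_mem_hSeg_smul_toHyperboloid_eq hA hB hx hy (by nlinarith)
  have ht2 : t ^ 2 = (x * u + y * m) * (r ^ 2 - 1) := by
    have hvv := congrArg (fun w => minkowski w w) hvQ
    simp only [map_add, map_smul, LinearMap.add_apply, LinearMap.smul_apply, smul_eq_mul,
      minkowski_toHyperboloid, hA, hB, hQ.1, hDist_self, hDist_comm B A, Real.cosh_zero] at hvv
    linear_combination hvv
  have hPQ : t * Real.cosh (hDist P Q) = x * u + y * m := by
    have hPv := congrArg (minkowski (toHyperboloid P)) hvQ
    simp only [map_add, map_smul, smul_eq_mul, minkowski_toHyperboloid, hA, hB, hP, hQ.1,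
      hDist_comm P A] at hPv
    linear_combination hPv
  refine ⟨Q, hQ, le_log_sqrt_two_add_one_of_cosh_le (hDist_nonneg hP hQ.1) ?_⟩
  have hK2 : x * u + y * m ≤ 2 * (r ^ 2 - 1) := by nlinarith
  have hsq : (t * Real.cosh (hDist P Q)) ^ 2 ≤ (t * √2) ^ 2 := by
    rw [hPQ, mul_pow, Real.sq_sqrt zero_le_two, ht2]
    nlinarith
  exact le_of_mul_le_mul_left
    ((pow_le_pow_iff_left₀ (by positivity) (by positivity) two_ne_zero).mp hsq) ht

end Triangles

/-- In hyperbolic space, for any geodesic triangle with vertices `A`, `B`,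
`C`, the side `AC` lies in the closed `ln (√2 + 1)`-neighborhood of the union
`AB ∪ BC` of the other two sides. -/
theorem hyperbolic_triangles_are_thin
    (A B C : ℝ × ℝ × ℝ) (hA : 0 < A.2.2) (hB : 0 < B.2.2) (hC : 0 < C.2.2) :
    ∀ P ∈ hSeg A C, ∃ Q ∈ hSeg A B ∪ hSeg B C,
      hDist P Q ≤ Real.log (Real.sqrt 2 + 1) := by
  intro P hP
  rcases angleNonacute_or_of_mem_hSeg hA hB hC hP with hABP | hCBP
  · obtain ⟨Q, hQ, hPQ⟩ := exists_mem_hSeg_hDist_le_of_angleNonacute hA hB hP.1 hABP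
    exact ⟨Q, Or.inl hQ, hPQ⟩
  · obtain ⟨Q, hQ, hPQ⟩ := exists_mem_hSeg_hDist_le_of_angleNonacute hC hB hP.1 hCBP
    exact ⟨Q, Or.inr (hSeg_comm C B ▸ hQ), hPQ⟩
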